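/- Let A, B, C be finitely generated abelian groups with B and C free abelian, and let f : A → B, g : B → C, h : C → A be group homomorphisms forming an exact triangle, i.e. im f = ker g, im g = ker h, and im h = ker f. Then rank A ≤ rank B + rank C. Moreover, if rank A = rank B + rank C, then g = 0, the sequence 0 → C → A → B → 0 (with maps h and f) is a short exact sequence, and A is a free abelian group of rank equal to rank B + rank C. -/

import Mathlib

open scoped TensorProduct

/-- The (torsion-free) rank of an abelian group `G`: the dimension over `ℚ` of `G ⊗ ℚ`. -/
noncomputable def abRank (G : Type*) [AddCommGroup G] : ℕ :=
  Module.finrank ℚ (ℚ ⊗[ℤ] G)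

/-!
Tensoring with the flat `ℤ`-module `ℚ` keeps the triangle exact, and rank–nullity for `f ⊗ ℚ`
gives `rank A = rank (im f) + rank (im h) ≤ rank B + rank C`. Equality forces `f ⊗ ℚ` to be onto,
so `g ⊗ ℚ = 0`, hence `g = 0` since `C` is torsion-free. Then `0 → C → A → B → 0` is exact, and it
splits because `B` is free, so `A ≅ C × B` is free.
-/

open Function LinearMap

section Triangle

open Module

variable {K U V W : Type*} [DivisionRing K]
  [AddCommGroup U] [Module K U] [AddCommGroup V] [Module K V] [AddCommGroup W] [Module K W]
  [FiniteDimensional K U] {f : U →ₗ[K] V} {g : V →ₗ[K] W} {h : W →ₗ[K] U}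

theorem Function.Exact.finrank_range_add_finrank_range (hhf : Exact h f) :
    finrank K (range f) + finrank K (range h) = finrank K U := by
  rw [← hhf.linearMap_ker_eq]
  exact f.finrank_range_add_finrank_ker

variable [FiniteDimensional K V] [FiniteDimensional K W]

theorem Function.Exact.finrank_le_finrank_add_finrank (hhf : Exact h f) :
    finrank K U ≤ finrank K V + finrank K W := by
  rw [← hhf.finrank_range_add_finrank_range]
  exact add_le_add (Submodule.finrank_le _) h.finrank_range_le

theorem Function.Exact.eq_zero_of_finrank_eq_add (hfg : Exact f g) (hhf : Exact h f)
    (heq : finrank K U = finrank K V + finrank K W) : g = 0 := by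
  have hrange : finrank K (range f) = finrank K V := by
    have := hhf.finrank_range_add_finrank_range
    have := Submodule.finrank_le (range f)
    have := h.finrank_range_le
    omega
  rw [← surjective_iff_eq_zero_of_exact hfg, ← range_eq_top]
  exact Submodule.eq_top_of_finrank_eq hrange

end Triangle

theorem Function.Exact.baseChange {R S M N P : Type*} [CommRing R] [CommRing S] [Algebra R S]
    [Module.Flat R S] [AddCommGroup M] [Module R M] [AddCommGroup N] [Module R N]
    [AddCommGroup P] [Module R P] {f : M →ₗ[R] N} {g : N →ₗ[R] P} (hfg : Exact f g) :
    Exact (f.baseChange S) (g.baseChange S) := by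
  simpa only [baseChange_eq_ltensor] using Module.Flat.lTensor_exact S hfg

theorem LinearMap.eq_zero_of_baseChange_eq_zero {R S M N : Type*} [CommRing R] [CommRing S]
    [Algebra R S] [AddCommGroup M] [Module R M] [AddCommGroup N] [Module R N] [Module.Flat R N]
    (hRS : Injective (algebraMap R S)) {g : M →ₗ[R] N} (hg : g.baseChange S = 0) : g = 0 := by
  have hinj : Injective ((Algebra.linearMap R S).rTensor N ∘ (TensorProduct.lid R N).symm) :=
    (Module.Flat.rTensor_preserves_injective_linearMap _ hRS).comp
      (TensorProduct.lid R N).symm.injective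
  ext m
  apply hinj
  simpa using LinearMap.congr_fun hg (1 ⊗ₜ m)

theorem Module.Free.of_exact {R M N P : Type*} [Ring R] [AddCommGroup M] [Module R M]
    [AddCommGroup N] [Module R N] [AddCommGroup P] [Module R P] [Module.Free R M]
    [Module.Free R P] {f : M →ₗ[R] N} {g : N →ₗ[R] P} (hfg : Exact f g)
    (hf : Function.Injective f) (hg : Surjective g) : Module.Free R N := by
  obtain ⟨l, hl⟩ := g.exists_rightInverse_of_surjective (range_eq_top.mpr hg)
  exact Module.Free.of_equiv (hfg.splitSurjectiveEquiv hf ⟨l, hl⟩).1.symm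

/-- **The "two out of three" rank principle for exact triangles of abelian groups.**
Let `A, B, C` be finitely generated abelian groups with `B` and `C` free abelian, and let
`f : A → B`, `g : B → C`, `h : C → A` form an exact triangle (`im f = ker g`,
`im g = ker h`, `im h = ker f`).  Then `rank A ≤ rank B + rank C`; moreover, if
`rank A = rank B + rank C`, then `g = 0`, the sequence `0 → C → A → B → 0` (with maps `h`
and `f`) is short exact, and `A` is free abelian of rank `rank B + rank C`. -/
theorem exact_triangle_rank_two_out_of_three
    (A B C : Type*) [AddCommGroup A] [AddCommGroup B] [AddCommGroup C]
    [AddGroup.FG A] [AddGroup.FG B] [AddGroup.FG C]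
    [Module.Free ℤ B] [Module.Free ℤ C]
    (f : A →+ B) (g : B →+ C) (h : C →+ A)
    (hfg : Function.Exact f g) (hgh : Function.Exact g h) (hhf : Function.Exact h f) :
    abRank A ≤ abRank B + abRank C ∧
    (abRank A = abRank B + abRank C →
      g = 0 ∧
      Function.Injective h ∧ Function.Exact h f ∧ Function.Surjective f ∧
      Module.Free ℤ A ∧ abRank A = abRank B + abRank C) := by
  have hfg : Exact f.toIntLinearMap g.toIntLinearMap := hfg
  have hgh : Exact g.toIntLinearMap h.toIntLinearMap := hgh
  have hhf : Exact h.toIntLinearMap f.toIntLinearMap := hhf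
  have : Module.Finite ℤ A := Module.Finite.iff_addGroup_fg.mpr ‹_›
  have : Module.Finite ℤ B := Module.Finite.iff_addGroup_fg.mpr ‹_›
  have : Module.Finite ℤ C := Module.Finite.iff_addGroup_fg.mpr ‹_›
  refine ⟨(hhf.baseChange (S := ℚ)).finrank_le_finrank_add_finrank, fun heq ↦ ?_⟩
  have hg : g.toIntLinearMap = 0 := eq_zero_of_baseChange_eq_zero (S := ℚ) Int.cast_injective
    (hfg.baseChange.eq_zero_of_finrank_eq_add hhf.baseChange heq)
  have hh : Injective h := (injective_iff_eq_zero_of_exact hgh).mpr hg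
  have hf : Surjective f := (surjective_iff_eq_zero_of_exact hfg).mpr hg
  refine ⟨?_, hh, hhf, hf, Module.Free.of_exact hhf hh hf, heq⟩
  ext b
  exact LinearMap.congr_fun hg b
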